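/- Let μ be a probability measure on the unit circle with infinite support, (Φ_n) its monic orthogonal polynomials, φ_n = Φ_n/‖Φ_n‖_μ its orthonormal polynomials, 0 < γ < 1, ζ = e^{iω} on the unit circle, and ν = (1-γ)μ + γδ_ω. Then the monic orthogonal polynomials of ν satisfy the Geronimus formula Φ_n(z, dν) = Φ_n(z) − Φ_n(ζ) K_{n-1}(z, ζ) / ((1-γ)γ^{-1} + K_{n-1}(ζ, ζ)), where K_{n-1}(z, ζ) = Σ_{j=0}^{n-1} conj(φ_j(ζ)) φ_j(z). -/

import Mathlib

open MeasureTheory Polynomial Finset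

noncomputable section

/-- The `L²(μ)` inner product `⟨f,g⟩_μ = ∫ conj (f z) * g z dμ(z)`. -/
def mInner (μ : Measure ℂ) (f g : ℂ → ℂ) : ℂ :=
  ∫ z, (starRingEnd ℂ) (f z) * g z ∂μ

/-- The `L²(μ)` norm `‖f‖_μ = (∫ |f z|² dμ(z))^{1/2}`. -/
def mNorm (μ : Measure ℂ) (f : ℂ → ℂ) : ℝ :=
  Real.sqrt (∫ z, ‖f z‖ ^ 2 ∂μ)

/-- `Φ` is the family of monic orthogonal polynomials for `μ`:
`Φ n` is monic of degree `n`, and distinct `Φ`'s are orthogonal in `L²(μ)`. -/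
def IsMonicOPS (μ : Measure ℂ) (Φ : ℕ → Polynomial ℂ) : Prop :=
  (∀ n, (Φ n).Monic ∧ (Φ n).natDegree = n) ∧
    ∀ m n, m ≠ n →
      mInner μ (fun z => (Φ m).eval z) (fun z => (Φ n).eval z) = 0

/-- `μ` is a measure on the unit circle `∂𝔻 = {z : ℂ | |z| = 1}`. -/
def OnCircle (μ : Measure ℂ) : Prop := μ {z : ℂ | ‖z‖ = 1}ᶜ = 0

/-- The (closed) support of `μ` is an infinite set: every closed set of
full measure is infinite. -/
def InfiniteSupport (μ : Measure ℂ) : Prop :=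
  ∀ t : Set ℂ, IsClosed t → μ tᶜ = 0 → t.Infinite


/-! For `k < n` the perturbed inner product splits as
`⟨Φ_k, p⟩_ν = (1-γ) ⟨Φ_k, p⟩_μ + γ conj (Φ_k ζ) p(ζ)`, and `K_{n-1}(·, ζ)` reproduces
`⟨Φ_k, K_{n-1}(·, ζ)⟩_μ = conj (Φ_k ζ)`. Hence for the monic polynomial
`Q = Φ_n - c K_{n-1}(·, ζ)` of degree `n` one gets
`⟨Φ_k, Q⟩_ν = conj (Φ_k ζ) (γ Φ_n(ζ) - c (1 - γ + γ K_{n-1}(ζ, ζ)))`, which vanishes for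
`c = Φ_n(ζ) / ((1-γ)γ⁻¹ + K_{n-1}(ζ, ζ))`. As `Φ_0, …, Φ_{n-1}` span the polynomials of degree
`< n`, `Q` is `ν`-orthogonal to all of them, and this characterizes `Φ_n(·, dν)` because `ν`,
like `μ`, has infinite support. -/

open ComplexConjugate

def PolyInnerIntegrable (μ : Measure ℂ) : Prop :=
  ∀ p q : ℂ[X], Integrable (fun z => conj (p.eval z) * q.eval z) μ

lemma OnCircle.polyInnerIntegrable {μ : Measure ℂ} [IsFiniteMeasure μ] (hμ : OnCircle μ) :
    PolyInnerIntegrable μ := by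
  intro p q
  have hrestrict : μ.restrict (Metric.sphere 0 1) = μ :=
    Measure.restrict_eq_self_of_ae_mem (by simpa [ae_iff, OnCircle, Set.compl_def] using hμ)
  rw [← hrestrict]
  exact (by fun_prop : Continuous fun z => conj (p.eval z) * q.eval z).continuousOn
    |>.integrableOn_compact (isCompact_sphere 0 1)

lemma PolyInnerIntegrable.smul_add_smul_dirac {μ : Measure ℂ} (hμ : PolyInnerIntegrable μ)
    {a b : ENNReal} (ha : a ≠ ⊤) (hb : b ≠ ⊤) (ζ : ℂ) :
    PolyInnerIntegrable (a • μ + b • Measure.dirac ζ) := fun p q =>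
  ((hμ p q).smul_measure ha).add_measure ((integrable_dirac enorm_lt_top).smul_measure hb)

lemma InfiniteSupport.of_absolutelyContinuous {μ ν : Measure ℂ} (hμ : InfiniteSupport μ)
    (hμν : μ ≪ ν) : InfiniteSupport ν :=
  fun t ht hν => hμ t ht (hμν hν)

lemma mInner_self_eq_mNorm_sq (μ : Measure ℂ) (f : ℂ → ℂ) :
    mInner μ f f = ((mNorm μ f ^ 2 : ℝ) : ℂ) := by
  rw [mNorm, Real.sq_sqrt (integral_nonneg fun z => by positivity), ← integral_complex_ofReal,
    mInner]
  congr 1 with z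
  rw [Complex.conj_mul']
  push_cast
  rfl

lemma mNorm_pos {μ : Measure ℂ} (hμ : PolyInnerIntegrable μ) (hsupp : InfiniteSupport μ)
    {p : ℂ[X]} (hp : p ≠ 0) : 0 < mNorm μ (fun z => p.eval z) := by
  refine Real.sqrt_pos.2 <| (integral_nonneg fun z => by positivity).lt_of_ne' fun h => hp ?_
  have hint : Integrable (fun z => ‖p.eval z‖ ^ 2) μ := by
    simpa [Complex.conj_mul', sq] using (hμ p p).norm
  have hzero : ∀ᵐ z ∂μ, p.eval z = 0 := by
    filter_upwards [(integral_eq_zero_iff_of_nonneg (fun z => by positivity) hint).1 h]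
      with z hz
    simpa using hz
  -- the zero set of `p` is closed of full measure, hence infinite
  exact eq_zero_of_infinite_isRoot p <| hsupp _ (isClosed_eq (by fun_prop) continuous_const)
    (by simpa [ae_iff, Set.compl_def] using hzero)

lemma mInner_smul_add_smul_dirac {μ : Measure ℂ} {f g : ℂ → ℂ}
    (hfg : Integrable (fun z => conj (f z) * g z) μ) {s t : ℝ} (hs : 0 ≤ s) (ht : 0 ≤ t)
    (ζ : ℂ) :
    mInner (ENNReal.ofReal s • μ + ENNReal.ofReal t • Measure.dirac ζ) f g
      = s * mInner μ f g + t * (conj (f ζ) * g ζ) := by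
  rw [mInner, integral_add_measure (hfg.smul_measure ENNReal.ofReal_ne_top)
      ((integrable_dirac enorm_lt_top).smul_measure ENNReal.ofReal_ne_top),
    integral_smul_measure, integral_smul_measure, integral_dirac,
    ENNReal.toReal_ofReal hs, ENNReal.toReal_ofReal ht, mInner]
  simp [Complex.real_smul]

def polyInner {μ : Measure ℂ} (hμ : PolyInnerIntegrable μ) : ℂ[X] →ₗ⋆[ℂ] ℂ[X] →ₗ[ℂ] ℂ :=
  LinearMap.mk₂'ₛₗ (starRingEnd ℂ) (RingHom.id ℂ)
    (fun p q => mInner μ (fun z => p.eval z) (fun z => q.eval z))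
    (fun p₁ p₂ q => by
      simp only [mInner, eval_add, map_add, add_mul]
      exact integral_add (hμ p₁ q) (hμ p₂ q))
    (fun c p q => by
      simp only [mInner, eval_smul, smul_eq_mul, map_mul, mul_assoc]
      exact integral_const_mul _ _)
    (fun p q₁ q₂ => by
      simp only [mInner, eval_add, mul_add]
      exact integral_add (hμ p q₁) (hμ p q₂))
    (fun c p q => by
      simp only [mInner, eval_smul, smul_eq_mul, RingHom.id_apply, mul_left_comm _ c]
      exact integral_const_mul _ _)

lemma polyInner_apply {μ : Measure ℂ} (hμ : PolyInnerIntegrable μ) (p q : ℂ[X]) :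
    polyInner hμ p q = mInner μ (fun z => p.eval z) (fun z => q.eval z) :=
  rfl

lemma span_image_Iio_eq_degreeLT {R : Type*} [Ring R] {P : ℕ → R[X]}
    (hP : ∀ k, (P k).Monic ∧ (P k).natDegree = k) (n : ℕ) :
    Submodule.span R (P '' Set.Iio n) = degreeLT R n := by
  nontriviality R
  let S : Sequence R := ⟨P, fun k => (degree_eq_iff_natDegree_eq (hP k).1.ne_zero).2 (hP k).2⟩
  exact S.span_degreeLT fun k _ => by simp [S, (hP k).1.leadingCoeff]

lemma polyInner_eq_zero_of_mem_degreeLT {μ : Measure ℂ} (hμ : PolyInnerIntegrable μ)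
    {P : ℕ → ℂ[X]} (hP : ∀ k, (P k).Monic ∧ (P k).natDegree = k) {n : ℕ} {r : ℂ[X]}
    (hr : ∀ k < n, polyInner hμ (P k) r = 0) {p : ℂ[X]} (hp : p ∈ degreeLT ℂ n) :
    polyInner hμ p r = 0 := by
  rw [← span_image_Iio_eq_degreeLT hP] at hp
  refine (Submodule.span_le (p := LinearMap.ker ((polyInner hμ).flip r))).2 ?_ hp
  rintro _ ⟨k, hk, rfl⟩
  exact hr k hk

lemma polyInner_self_ne_zero {μ : Measure ℂ} (hμ : PolyInnerIntegrable μ)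
    (hsupp : InfiniteSupport μ) {p : ℂ[X]} (hp : p ≠ 0) : polyInner hμ p p ≠ 0 := by
  rw [polyInner_apply, mInner_self_eq_mNorm_sq, Complex.ofReal_ne_zero]
  exact (pow_pos (mNorm_pos hμ hsupp hp) 2).ne'

lemma IsMonicOPS.eq_of_orthogonal {μ : Measure ℂ} (hμ : PolyInnerIntegrable μ)
    (hsupp : InfiniteSupport μ) {Ψ : ℕ → ℂ[X]} (hΨ : IsMonicOPS μ Ψ) {n : ℕ} {Q : ℂ[X]}
    (hQ : Q.Monic) (hQn : Q.natDegree = n) (horth : ∀ p ∈ degreeLT ℂ n, polyInner hμ p Q = 0) :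
    Ψ n = Q := by
  by_contra hne
  have hdeg : Ψ n - Q ∈ degreeLT ℂ n := by
    have hΨn := hΨ.1 n
    have hdegΨ : (Ψ n).degree = n := (degree_eq_iff_natDegree_eq hΨn.1.ne_zero).2 hΨn.2
    rw [mem_degreeLT, ← hdegΨ]
    refine degree_sub_lt_left ?_ hΨn.1.ne_zero (by rw [hΨn.1.leadingCoeff, hQ.leadingCoeff])
    rw [hdegΨ, (degree_eq_iff_natDegree_eq hQ.ne_zero).2 hQn]
  have hΨ_orth : polyInner hμ (Ψ n - Q) (Ψ n) = 0 :=
    polyInner_eq_zero_of_mem_degreeLT hμ hΨ.1 (fun k hk => hΨ.2 k n hk.ne) hdeg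
  exact polyInner_self_ne_zero hμ hsupp (sub_ne_zero.2 hne) <| by
    rw [map_sub (polyInner hμ (Ψ n - Q)), hΨ_orth, horth _ hdeg, sub_zero]

/-- The polynomial `K_{n-1}(·, ζ)`: the sum runs over `j < n`. -/
def cdKernel (μ : Measure ℂ) (Φ : ℕ → ℂ[X]) (n : ℕ) (ζ : ℂ) : ℂ[X] :=
  ∑ j ∈ range n, (conj ((Φ j).eval ζ) / ((mNorm μ (fun w => (Φ j).eval w) ^ 2 : ℝ) : ℂ)) • Φ j

lemma cdKernel_eval {μ : Measure ℂ} {Φ : ℕ → ℂ[X]} {φ : ℕ → ℂ → ℂ}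
    (hφ : ∀ m z, φ m z = (Φ m).eval z / (mNorm μ (fun w => (Φ m).eval w) : ℂ)) (n : ℕ)
    (ζ z : ℂ) :
    (cdKernel μ Φ n ζ).eval z = ∑ j ∈ range n, conj (φ j ζ) * φ j z := by
  simp only [cdKernel, eval_finsetSum, eval_smul, smul_eq_mul, hφ, map_div₀,
    Complex.conj_ofReal]
  push_cast
  refine sum_congr rfl fun j _ => by ring

lemma cdKernel_eval_self {μ : Measure ℂ} {Φ : ℕ → ℂ[X]} {φ : ℕ → ℂ → ℂ}
    (hφ : ∀ m z, φ m z = (Φ m).eval z / (mNorm μ (fun w => (Φ m).eval w) : ℂ)) (n : ℕ)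
    (ζ : ℂ) : (cdKernel μ Φ n ζ).eval ζ = ((∑ j ∈ range n, ‖φ j ζ‖ ^ 2 : ℝ) : ℂ) := by
  rw [cdKernel_eval hφ]
  push_cast
  exact sum_congr rfl fun j _ => Complex.conj_mul' _

lemma cdKernel_mem_degreeLT (μ : Measure ℂ) {Φ : ℕ → ℂ[X]}
    (hΦ : ∀ k, (Φ k).Monic ∧ (Φ k).natDegree = k) (n : ℕ) (ζ : ℂ) :
    cdKernel μ Φ n ζ ∈ degreeLT ℂ n := by
  rw [← span_image_Iio_eq_degreeLT hΦ]
  exact Submodule.sum_mem _ fun j hj =>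
    Submodule.smul_mem _ _ (Submodule.subset_span ⟨j, mem_range.1 hj, rfl⟩)

lemma polyInner_cdKernel {μ : Measure ℂ} (hμ : PolyInnerIntegrable μ)
    (hsupp : InfiniteSupport μ) {Φ : ℕ → ℂ[X]} (hΦ : IsMonicOPS μ Φ) {n k : ℕ} (hk : k < n)
    (ζ : ℂ) : polyInner hμ (Φ k) (cdKernel μ Φ n ζ) = conj ((Φ k).eval ζ) := by
  have hself := polyInner_self_ne_zero hμ hsupp (hΦ.1 k).1.ne_zero
  rw [polyInner_apply, mInner_self_eq_mNorm_sq] at hself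
  rw [cdKernel, map_sum, sum_eq_single_of_mem k (mem_range.2 hk)
    fun j _ hjk => by rw [map_smul, polyInner_apply, hΦ.2 k j hjk.symm, smul_zero]]
  rw [map_smul, polyInner_apply, mInner_self_eq_mNorm_sq, smul_eq_mul, div_mul_cancel₀ _ hself]

theorem IsMonicOPS.eq_sub_smul_cdKernel {μ : Measure ℂ} (hμ : PolyInnerIntegrable μ)
    (hsupp : InfiniteSupport μ) {Φ Ψ : ℕ → ℂ[X]} (hΦ : IsMonicOPS μ Φ) {s t : ℝ} (hs : 0 < s)
    (ht : 0 ≤ t) {ζ : ℂ}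
    (hΨ : IsMonicOPS (ENNReal.ofReal s • μ + ENNReal.ofReal t • Measure.dirac ζ) Ψ) (n : ℕ) :
    Ψ n = Φ n - (t * (Φ n).eval ζ / (s + t * (cdKernel μ Φ n ζ).eval ζ)) • cdKernel μ Φ n ζ := by
  set K := cdKernel μ Φ n ζ
  set c : ℂ := t * (Φ n).eval ζ / (s + t * K.eval ζ) with hc
  obtain ⟨κ, hκ0, hκ⟩ : ∃ κ : ℝ, 0 ≤ κ ∧ K.eval ζ = κ :=
    ⟨_, by positivity, cdKernel_eval_self (fun _ _ => rfl) n ζ⟩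
  have hden : (s : ℂ) + t * κ ≠ 0 := by exact_mod_cast (by positivity : 0 < s + t * κ).ne'
  have hν :=
    hμ.smul_add_smul_dirac (ENNReal.ofReal_ne_top (r := s)) (ENNReal.ofReal_ne_top (r := t)) ζ
  have hKdeg : (c • K).degree < (Φ n).degree := by
    rw [(degree_eq_iff_natDegree_eq (hΦ.1 n).1.ne_zero).2 (hΦ.1 n).2, ← mem_degreeLT]
    exact Submodule.smul_mem _ _ (cdKernel_mem_degreeLT μ hΦ.1 n ζ)
  refine hΨ.eq_of_orthogonal hν (hsupp.of_absolutelyContinuous ?_) ?_ ?_ ?_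
  · exact (Measure.absolutelyContinuous_smul (by simpa using hs)).add_right _
  · exact (hΦ.1 n).1.sub_of_left hKdeg
  · rw [natDegree_eq_of_degree_eq (degree_sub_eq_left_of_degree_lt hKdeg), (hΦ.1 n).2]
  · refine fun p => polyInner_eq_zero_of_mem_degreeLT hν hΦ.1 fun k hk => ?_
    rw [polyInner_apply, mInner_smul_add_smul_dirac (hμ _ _) hs.le ht, ← polyInner_apply hμ,
      map_sub, map_smul, polyInner_cdKernel hμ hsupp hΦ hk, polyInner_apply, hΦ.2 k n hk.ne,
      eval_sub, eval_smul, smul_eq_mul, smul_eq_mul, hc, hκ]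
    field_simp
    ring

theorem geronimus_formula_general
    (μ : Measure ℂ) [IsProbabilityMeasure μ] (hcirc : OnCircle μ)
    (hsupp : InfiniteSupport μ)
    (Φ : ℕ → Polynomial ℂ) (hΦ : IsMonicOPS μ Φ)
    (φ : ℕ → ℂ → ℂ)
    (hφ : ∀ m z, φ m z = (Φ m).eval z / (mNorm μ (fun w => (Φ m).eval w) : ℂ))
    (γ : ℝ) (hγ0 : 0 < γ) (hγ1 : γ < 1)
    (ζ : ℂ)
    (ν : Measure ℂ)
    (hν : ν = ENNReal.ofReal (1 - γ) • μ + ENNReal.ofReal γ • Measure.dirac ζ)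
    (Ψ : ℕ → Polynomial ℂ) (hΨ : IsMonicOPS ν Ψ)
    (n : ℕ) (z : ℂ) :
    (Ψ n).eval z = (Φ n).eval z -
      (Φ n).eval ζ * (∑ j ∈ Finset.range n, (starRingEnd ℂ) (φ j ζ) * φ j z) /
        (((1 - γ) * γ⁻¹ + ∑ j ∈ Finset.range n, ‖φ j ζ‖ ^ 2 : ℝ) : ℂ) := by
  subst hν
  rw [hΦ.eq_sub_smul_cdKernel hcirc.polyInnerIntegrable hsupp (sub_pos.2 hγ1) hγ0.le hΨ n,
    eval_sub, eval_smul, smul_eq_mul, cdKernel_eval_self hφ, cdKernel_eval hφ]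
  have hγ : (γ : ℂ) ≠ 0 := by exact_mod_cast hγ0.ne'
  have hden : ((1 - γ + γ * ∑ j ∈ range n, ‖φ j ζ‖ ^ 2 : ℝ) : ℂ) ≠ 0 := by
    have := sub_pos.2 hγ1
    exact_mod_cast (by positivity : 0 < 1 - γ + γ * ∑ j ∈ range n, ‖φ j ζ‖ ^ 2).ne'
  push_cast at hden ⊢
  field_simp

/-- **Geronimus' formula.**
`Φ_n(z, dν) = Φ_n(z) - Φ_n(ζ) K_{n-1}(z, ζ) / ((1-γ)γ⁻¹ + K_{n-1}(ζ, ζ))`. -/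
theorem geronimus_formula
    (μ : Measure ℂ) [IsProbabilityMeasure μ] (hcirc : OnCircle μ)
    (hsupp : InfiniteSupport μ)
    (Φ : ℕ → Polynomial ℂ) (hΦ : IsMonicOPS μ Φ)
    (φ : ℕ → ℂ → ℂ)
    (hφ : ∀ m z, φ m z = (Φ m).eval z / (mNorm μ (fun w => (Φ m).eval w) : ℂ))
    (γ : ℝ) (hγ0 : 0 < γ) (hγ1 : γ < 1)
    (ω : ℝ) (ζ : ℂ) (hζ : ζ = Complex.exp (ω * Complex.I))
    (ν : Measure ℂ)
    (hν : ν = ENNReal.ofReal (1 - γ) • μ + ENNReal.ofReal γ • Measure.dirac ζ)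
    (Ψ : ℕ → Polynomial ℂ) (hΨ : IsMonicOPS ν Ψ)
    (n : ℕ) (z : ℂ) :
    (Ψ n).eval z = (Φ n).eval z -
      (Φ n).eval ζ * (∑ j ∈ Finset.range n, (starRingEnd ℂ) (φ j ζ) * φ j z) /
        (((1 - γ) * γ⁻¹ + ∑ j ∈ Finset.range n, ‖φ j ζ‖ ^ 2 : ℝ) : ℂ) :=
  geronimus_formula_general μ hcirc hsupp Φ hΦ φ hφ γ hγ0 hγ1 ζ ν hν Ψ hΨ n z
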